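/- arXiv:2011.14739 — 4 statements merged into one kernel-verified Lean document; each statement's English description precedes it below -/
import Mathlib

section
/- For d > 0 and α ∈ (0, π), define f(t) = arcsinh( sin α · sinh t / (cosh t − cos α · sinh t) ) + arcsinh( sin α · sinh(d−t) / (cosh t − cos α · sinh t) ) on (0, d). If t ∈ (0,d) satisfies f'(t) = 0, then tanh(2t) = 2 cos α / (1 + cos² α), equivalently tanh t = cos α. -/
/-!
Write `g = cosh t - c sinh t` and `G = cosh d - c sinh d`, with `c = cos α`, `s = sin α`.
Since `cosh t · g - sinh t · g' = 1` and, by the addition formulas,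
`cosh (d - t) · g + sinh (d - t) · g' = G`, the derivative of the width function is
`s / g² · ((1 + (s sinh t / g)²)^(-1/2) - G (1 + (s sinh (d - t) / g)²)^(-1/2))`.
At a critical point therefore `g² + s² sinh² (d - t) = G² (g² + s² sinh² t)`, and with
`s² = 1 - c²` the difference of the two sides factors as `-2 sinh d · G · g · (sinh t - c cosh t)`.
The first three factors are positive, so `tanh t = c`, and the double angle formula for `tanh`
gives the other form.
-/

open Real

theorem Real.tanh_two_mul (x : ℝ) : tanh (2 * x) = 2 * tanh x / (1 + tanh x ^ 2) := by
  have hx := (cosh_pos x).ne'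
  rw [tanh_eq_sinh_div_cosh, tanh_eq_sinh_div_cosh, sinh_two_mul, cosh_two_mul]
  field_simp

theorem sq_add_sq_eq_of_inv_sqrt_smul_add_eq_zero {s g G a b : ℝ} (hs : s ≠ 0) (hg : g ≠ 0)
    (h : (√(1 + (s * a / g) ^ 2))⁻¹ • (s / g ^ 2) +
      (√(1 + (s * b / g) ^ 2))⁻¹ • (-(s * G) / g ^ 2) = 0) :
    g ^ 2 + s ^ 2 * b ^ 2 = G ^ 2 * (g ^ 2 + s ^ 2 * a ^ 2) := by
  have hA : 0 ≤ 1 + (s * a / g) ^ 2 := by positivity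
  have hB : 0 ≤ 1 + (s * b / g) ^ 2 := by positivity
  have hsqrt : √(1 + (s * b / g) ^ 2) = G * √(1 + (s * a / g) ^ 2) := by
    have ha : √(1 + (s * a / g) ^ 2) ≠ 0 := by positivity
    have hb : √(1 + (s * b / g) ^ 2) ≠ 0 := by positivity
    generalize √(1 + (s * a / g) ^ 2) = A at h ha ⊢
    generalize √(1 + (s * b / g) ^ 2) = B at h hb ⊢
    simp only [smul_eq_mul] at h
    field_simp at h
    rw [mul_zero, mul_eq_zero, or_iff_right hs] at h
    linear_combination h
  have hsq := congrArg (· ^ 2) hsqrt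
  simp only [mul_pow, sq_sqrt hA, sq_sqrt hB] at hsq
  field_simp at hsq
  linear_combination hsq

section CoshSubMulSinh

variable {c : ℝ}

theorem cosh_sub_mul_sinh_pos (hc : |c| ≤ 1) (u : ℝ) : 0 < cosh u - c * sinh u := by
  have : c * sinh u < cosh u := calc
    c * sinh u ≤ |c| * |sinh u| := (le_abs_self _).trans (abs_mul _ _).le
    _ ≤ |sinh u| := mul_le_of_le_one_left (abs_nonneg _) hc
    _ < cosh u := by rw [abs_sinh, ← cosh_abs]; exact sinh_lt_cosh _
  linarith

theorem hasDerivAt_mul_sinh_div_cosh_sub_mul_sinh (s : ℝ) {t : ℝ}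
    (hg : cosh t - c * sinh t ≠ 0) :
    HasDerivAt (fun u ↦ s * sinh u / (cosh u - c * sinh u))
      (s / (cosh t - c * sinh t) ^ 2) t := by
  refine (((hasDerivAt_sinh t).const_mul s).div
    ((hasDerivAt_cosh t).sub ((hasDerivAt_sinh t).const_mul c)) hg).congr_deriv ?_
  simp only [Pi.sub_apply]
  linear_combination (s / (cosh t - c * sinh t) ^ 2) * cosh_sq_sub_sinh_sq t

theorem hasDerivAt_mul_sinh_sub_div_cosh_sub_mul_sinh (s d : ℝ) {t : ℝ}
    (hg : cosh t - c * sinh t ≠ 0) :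
    HasDerivAt (fun u ↦ s * sinh (d - u) / (cosh u - c * sinh u))
      (-(s * (cosh d - c * sinh d)) / (cosh t - c * sinh t) ^ 2) t := by
  refine (((((hasDerivAt_id t).const_sub d).sinh).const_mul s).div
    ((hasDerivAt_cosh t).sub ((hasDerivAt_sinh t).const_mul c)) hg).congr_deriv ?_
  simp only [Pi.sub_apply, id, cosh_sub, sinh_sub]
  linear_combination (-(s * (cosh d - c * sinh d)) / (cosh t - c * sinh t) ^ 2) *
    cosh_sq_sub_sinh_sq t

theorem sq_add_sinh_sq_sub_sq_mul_sq_add_sinh_sq (d t : ℝ) :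
    (cosh t - c * sinh t) ^ 2 + (1 - c ^ 2) * sinh (d - t) ^ 2 -
        (cosh d - c * sinh d) ^ 2 * ((cosh t - c * sinh t) ^ 2 + (1 - c ^ 2) * sinh t ^ 2) =
      -2 * sinh d * (cosh d - c * sinh d) * (cosh t - c * sinh t) * (sinh t - c * cosh t) := by
  simp only [cosh_eq, sinh_eq, exp_sub, exp_neg]
  field_simp
  ring

theorem tanh_eq_of_sq_add_sinh_sq_eq {d : ℝ} (hd : 0 < d) (hc : |c| ≤ 1) (t : ℝ)
    (h : (cosh t - c * sinh t) ^ 2 + (1 - c ^ 2) * sinh (d - t) ^ 2 =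
      (cosh d - c * sinh d) ^ 2 * ((cosh t - c * sinh t) ^ 2 + (1 - c ^ 2) * sinh t ^ 2)) :
    tanh t = c := by
  have hprod := sq_add_sinh_sq_sub_sq_mul_sq_add_sinh_sq (c := c) d t
  rw [h, sub_self] at hprod
  have hpos : 0 < 2 * sinh d * (cosh d - c * sinh d) * (cosh t - c * sinh t) := by
    have := cosh_sub_mul_sinh_pos hc d
    have := cosh_sub_mul_sinh_pos hc t
    have := sinh_pos_iff.mpr hd
    positivity
  have hsinh : sinh t = c * cosh t := by
    have hzero : 2 * sinh d * (cosh d - c * sinh d) * (cosh t - c * sinh t) *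
        (sinh t - c * cosh t) = 0 := by
      linear_combination hprod
    linarith [(mul_eq_zero.mp hzero).resolve_left hpos.ne']
  rw [tanh_eq_sinh_div_cosh, hsinh, mul_div_assoc, div_self (cosh_pos t).ne', mul_one]

end CoshSubMulSinh

theorem stmt0_general (d α : ℝ) (hd : 0 < d) (hα : α ∈ Set.Ioo 0 π)
    (f : ℝ → ℝ)
    (hf : ∀ t : ℝ, f t =
      arsinh (sin α * sinh t / (cosh t - cos α * sinh t)) +
      arsinh (sin α * sinh (d - t) / (cosh t - cos α * sinh t)))
    (t : ℝ) (hcrit : deriv f t = 0) :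
    tanh (2 * t) = 2 * cos α / (1 + cos α ^ 2) ∧ tanh t = cos α := by
  have hs : sin α ≠ 0 := (sin_pos_of_pos_of_lt_pi hα.1 hα.2).ne'
  have hg : cosh t - cos α * sinh t ≠ 0 := (cosh_sub_mul_sinh_pos (abs_cos_le_one α) t).ne'
  obtain rfl : f = _ := funext hf
  have hf' := (hasDerivAt_mul_sinh_div_cosh_sub_mul_sinh (sin α) hg).arsinh.add
    (hasDerivAt_mul_sinh_sub_div_cosh_sub_mul_sinh (sin α) d hg).arsinh
  have hsq := sq_add_sq_eq_of_inv_sqrt_smul_add_eq_zero hs hg (hf'.deriv ▸ hcrit)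
  rw [sin_sq] at hsq
  have htanh := tanh_eq_of_sq_add_sinh_sq_eq hd (abs_cos_le_one α) t hsq
  exact ⟨by rw [tanh_two_mul, htanh], htanh⟩

/-- Critical points of the width function of a hyperbolic segment. -/
theorem stmt0 (d α : ℝ) (hd : 0 < d) (hα : α ∈ Set.Ioo 0 π)
    (f : ℝ → ℝ)
    (hf : ∀ t : ℝ, f t =
      arsinh (sin α * sinh t / (cosh t - cos α * sinh t)) +
      arsinh (sin α * sinh (d - t) / (cosh t - cos α * sinh t)))
    (t : ℝ) (ht : t ∈ Set.Ioo 0 d) (hcrit : deriv f t = 0) :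
    tanh (2 * t) = 2 * cos α / (1 + cos α ^ 2) ∧ tanh t = cos α :=
  stmt0_general d α hd hα f hf t hcrit
end

section
/- For α ∈ (0, π) and t, d > 0 with t ≤ d, the equation cosh d − cos α · sinh d = sqrt((cosh t − cos α sinh t)² + sin²α sinh²(d−t)) / sqrt((cosh t − cos α sinh t)² + sin²α sinh² t) is equivalent to 0 = (cosh d − cos α sinh d) · ((1 + cos²α) sinh(2t) − 2 cos α cosh(2t)). -/
open Real

theorem stmt2 (α t d : ℝ) (hα : α ∈ Set.Ioo 0 π) (ht : 0 < t) (hd : 0 < d)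
    (htd : t ≤ d) :
    (cosh d - cos α * sinh d =
      Real.sqrt ((cosh t - cos α * sinh t) ^ 2 + sin α ^ 2 * sinh (d - t) ^ 2) /
      Real.sqrt ((cosh t - cos α * sinh t) ^ 2 + sin α ^ 2 * sinh t ^ 2)) ↔
    (0 = (cosh d - cos α * sinh d) *
      ((1 + cos α ^ 2) * sinh (2 * t) - 2 * cos α * cosh (2 * t))) := by
  obtain ⟨hα0, hαπ⟩ := hα
  have hs : 0 < sin α := Real.sin_pos_of_pos_of_lt_pi hα0 hαπ
  have hc2 : cos α ^ 2 < 1 := by nlinarith [sin_sq_add_cos_sq α]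
  have hc1 : cos α < 1 := by nlinarith
  have hc1' : -1 < cos α := by nlinarith
  have hsd : 0 < sinh d := Real.sinh_pos_iff.2 hd
  have hst : 0 < sinh t := Real.sinh_pos_iff.2 ht
  have hK : 0 < cosh d - cos α * sinh d := by
    nlinarith [Real.cosh_sub_sinh d, Real.exp_pos (-d)]
  have hft : 0 < cosh t - cos α * sinh t := by
    nlinarith [Real.cosh_sub_sinh t, Real.exp_pos (-t)]
  set K := cosh d - cos α * sinh d with hKdef
  set A := (cosh t - cos α * sinh t) ^ 2 + sin α ^ 2 * sinh (d - t) ^ 2 with hA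
  set B := (cosh t - cos α * sinh t) ^ 2 + sin α ^ 2 * sinh t ^ 2 with hB
  have hBpos : 0 < B := by positivity
  have hApos : 0 ≤ A := by positivity
  have hsB : 0 < Real.sqrt B := Real.sqrt_pos.2 hBpos
  have hid : K ^ 2 * B - A = (K * sinh d) *
      ((1 + cos α ^ 2) * sinh (2 * t) - 2 * cos α * cosh (2 * t)) := by
    rw [hA, hB, hKdef, Real.sinh_sub, Real.sinh_two_mul, Real.cosh_two_mul]
    have h1 : cosh t ^ 2 = sinh t ^ 2 + 1 := Real.cosh_sq t
    have h2 : cosh d ^ 2 = sinh d ^ 2 + 1 := Real.cosh_sq d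
    have h3 : sin α ^ 2 = 1 - cos α ^ 2 := by nlinarith [sin_sq_add_cos_sq α]
    linear_combination (-1 + cosh d ^ 2 - sin α ^ 2 * sinh d ^ 2 -
        cos α ^ 2 * sinh d ^ 2) * h1 +
      (1 + sinh t ^ 2 - 2 * cos α * sinh t * cosh t + cos α ^ 2 * sinh t ^ 2) * h2 +
      (-sinh d ^ 2 + 2 * sinh t * cosh t * sinh d * cosh d - sinh t ^ 2 * sinh d ^ 2 -
        2 * cos α * sinh t ^ 2 * sinh d * cosh d + cos α ^ 2 * sinh t ^ 2 * sinh d ^ 2) * h3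
  constructor
  · intro h
    have h' : K * Real.sqrt B = Real.sqrt A := by
      field_simp at h
      linarith [h]
    have hKB : K ^ 2 * B = A := by
      have := congrArg (· ^ 2) h'
      simp only [mul_pow, Real.sq_sqrt hBpos.le, Real.sq_sqrt hApos] at this
      linarith
    have : (K * sinh d) * ((1 + cos α ^ 2) * sinh (2 * t) - 2 * cos α * cosh (2 * t)) = 0 := by
      rw [← hid, hKB]; ring
    have hE : (1 + cos α ^ 2) * sinh (2 * t) - 2 * cos α * cosh (2 * t) = 0 := by
      rcases mul_eq_zero.1 this with h0 | h0
      · exact absurd h0 (by positivity)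
      · exact h0
    rw [hE]; ring
  · intro h
    have hE : (1 + cos α ^ 2) * sinh (2 * t) - 2 * cos α * cosh (2 * t) = 0 := by
      rcases mul_eq_zero.1 h.symm with h0 | h0
      · exact absurd h0 hK.ne'
      · exact h0
    have hKB : K ^ 2 * B = A := by
      have : K ^ 2 * B - A = 0 := by rw [hid, hE]; ring
      linarith
    have hsqA : Real.sqrt A = K * Real.sqrt B := by
      rw [← hKB, show K ^ 2 * B = (K * Real.sqrt B) ^ 2 by
        rw [mul_pow, Real.sq_sqrt hBpos.le]]
      exact Real.sqrt_sq (by positivity)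
    rw [hsqA]
    field_simp
end

section
/- For a, h > 0, let d satisfy cosh(d/2) = cosh a · cosh h, and let α, β ∈ (0, π/2) satisfy sin β = sinh a / sinh(d/2) and cos(α + β) = tanh h. Then sin α = tanh h · (cosh a − sinh a) / sinh(d/2) and cos α = (cosh a · sinh² h + sinh a)/(cosh h · sinh(d/2)). -/
/-! The diagonal splits off a hyperbolic right triangle with legs `a`, `h` and hypotenuse `d / 2`,
in which `β` is the angle opposite `a`, so `cos β = cosh a * sinh h / sinh (d / 2)`; and
`cos (α + β) = tanh h` with `0 < α + β < π` gives `sin (α + β) = 1 / cosh h`. Expanding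
`α = (α + β) - β` by the subtraction formulas yields both identities. -/

open Real

namespace Real

theorem sinh_sq_sub_sinh_sq_of_cosh_eq_mul_cosh {a t c : ℝ} (hc : cosh c = cosh a * cosh t) :
    sinh c ^ 2 - sinh a ^ 2 = (cosh a * sinh t) ^ 2 := by
  have hc2 := congrArg (· ^ 2) hc
  simp only [cosh_sq] at hc2
  linear_combination hc2 + cosh a ^ 2 * cosh_sq t + cosh_sq a

theorem sin_eq_inv_cosh_of_cos_eq_tanh {x t : ℝ} (hx₀ : 0 ≤ x) (hxπ : x ≤ π)
    (hcos : cos x = tanh t) : sin x = (cosh t)⁻¹ := by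
  have hsq : 1 - cos x ^ 2 = (cosh t)⁻¹ ^ 2 := by
    rw [hcos, tanh_eq_sinh_div_cosh]
    field_simp
    linear_combination cosh_sq t
  rw [sin_eq_sqrt_one_sub_cos_sq hx₀ hxπ, hsq, sqrt_sq (by positivity)]

theorem cos_eq_of_sin_eq_sinh_div_sinh {a t c β : ℝ} (hc : cosh c = cosh a * cosh t)
    (hc₀ : 0 < sinh c) (ht : 0 ≤ t) (hβl : -(π / 2) ≤ β) (hβu : β ≤ π / 2)
    (hsin : sin β = sinh a / sinh c) : cos β = cosh a * sinh t / sinh c := by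
  have hsq : 1 - sin β ^ 2 = (cosh a * sinh t / sinh c) ^ 2 := by
    rw [hsin, div_pow, div_pow, ← sinh_sq_sub_sinh_sq_of_cosh_eq_mul_cosh hc]
    field_simp
  have hnonneg : 0 ≤ cosh a * sinh t / sinh c :=
    div_nonneg (mul_nonneg (cosh_pos a).le (sinh_nonneg_iff.2 ht)) hc₀.le
  rw [cos_eq_sqrt_one_sub_sin_sq hβl hβu, hsq, sqrt_sq hnonneg]

end Real

theorem stmt13 (a h d α β : ℝ) (ha : 0 < a) (hh : 0 < h)
    (hd : cosh (d / 2) = cosh a * cosh h)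
    (hα : α ∈ Set.Ioo 0 (π / 2)) (hβ : β ∈ Set.Ioo 0 (π / 2))
    (hsβ : sin β = sinh a / sinh (d / 2))
    (hab : cos (α + β) = tanh h) :
    sin α = tanh h * (cosh a - sinh a) / sinh (d / 2) ∧
    cos α = (cosh a * sinh h ^ 2 + sinh a) / (cosh h * sinh (d / 2)) := by
  obtain ⟨hα₀, hα₁⟩ := hα
  obtain ⟨hβ₀, hβ₁⟩ := hβ
  have hS : 0 < sinh (d / 2) := by
    have : 0 < sinh a / sinh (d / 2) := hsβ ▸ sin_pos_of_pos_of_lt_pi hβ₀ (by linarith)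
    exact (div_pos_iff_of_pos_left (sinh_pos_iff.2 ha)).1 this
  have hcβ : cos β = cosh a * sinh h / sinh (d / 2) :=
    cos_eq_of_sin_eq_sinh_div_sinh hd hS hh.le (by linarith) hβ₁.le hsβ
  have hsab : sin (α + β) = (cosh h)⁻¹ :=
    sin_eq_inv_cosh_of_cos_eq_tanh (by linarith) (by linarith) hab
  constructor
  · rw [← add_sub_cancel_right α β, sin_sub, hsab, hab, hcβ, hsβ, tanh_eq_sinh_div_cosh]
    field_simp
  · rw [← add_sub_cancel_right α β, cos_sub, hsab, hab, hcβ, hsβ, tanh_eq_sinh_div_cosh]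
    field_simp
end

section
/- For real x, y > 0, (tanh x)/(tanh(x+y)) = 1 − 1/(cosh² x · (tanh x/tanh y + 1)). Consequently, in a hyperbolic triangle with median AM_A = AM + MM_A, median point M, and diameter bound max(AM,BM,CM) ≤ d, one has tanh(AM)/tanh(AM_A) = 1 − 1/(cosh(AM)·(cosh AM + cosh BM + cosh CM)) ≤ 1 − 1/(3 cosh² d). -/
open Real

lemma part1_aux (x y : ℝ) (hx : 0 < x) (hy : 0 < y) :
    tanh x / tanh (x + y) = 1 - 1 / (cosh x ^ 2 * (tanh x / tanh y + 1)) := by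
  have hcx : (0:ℝ) < cosh x := cosh_pos x
  have hcy : (0:ℝ) < cosh y := cosh_pos y
  have hsx : (0:ℝ) < sinh x := sinh_pos_iff.2 hx
  have hsy : (0:ℝ) < sinh y := sinh_pos_iff.2 hy
  have hnum : (0:ℝ) < sinh x * cosh y + cosh x * sinh y := by positivity
  have hden : (0:ℝ) < cosh x * cosh y + sinh x * sinh y := by positivity
  have hid : cosh x ^ 2 = sinh x ^ 2 + 1 := by
    have := Real.cosh_sq_sub_sinh_sq x; linarith
  rw [tanh_eq_sinh_div_cosh, tanh_eq_sinh_div_cosh, tanh_eq_sinh_div_cosh,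
    sinh_add, cosh_add]
  have h1 : sinh x / cosh x / (sinh y / cosh y) + 1
      = (sinh x * cosh y + cosh x * sinh y) / (cosh x * sinh y) := by
    field_simp
  rw [h1]
  field_simp
  linear_combination (-(sinh y)) * hid

theorem stmt16 :
    (∀ x y : ℝ, 0 < x → 0 < y →
      tanh x / tanh (x + y) = 1 - 1 / (cosh x ^ 2 * (tanh x / tanh y + 1))) ∧
    (∀ AM MMA BM CM d : ℝ, 0 < AM → 0 < MMA → 0 < BM → 0 < CM →
      tanh AM / tanh MMA = (cosh BM + cosh CM) / cosh AM →
      AM ≤ d → BM ≤ d → CM ≤ d →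
      tanh AM / tanh (AM + MMA) =
        1 - 1 / (cosh AM * (cosh AM + cosh BM + cosh CM)) ∧
      tanh AM / tanh (AM + MMA) ≤ 1 - 1 / (3 * cosh d ^ 2)) := by
  constructor
  · exact part1_aux
  · intro AM MMA BM CM d hAM hMMA hBM hCM hmed hAd hBd hCd
    have hcA : (0:ℝ) < cosh AM := cosh_pos AM
    have hcB : (0:ℝ) < cosh BM := cosh_pos BM
    have hcC : (0:ℝ) < cosh CM := cosh_pos CM
    have hcd : (0:ℝ) < cosh d := cosh_pos d
    have heq : tanh AM / tanh (AM + MMA)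
        = 1 - 1 / (cosh AM * (cosh AM + cosh BM + cosh CM)) := by
      rw [part1_aux AM MMA hAM hMMA, hmed]
      congr 1
      field_simp
      ring
    refine ⟨heq, ?_⟩
    rw [heq]
    have hle : ∀ z : ℝ, 0 < z → z ≤ d → cosh z ≤ cosh d := by
      intro z hz hzd
      rw [Real.cosh_le_cosh, abs_of_pos hz, abs_of_pos (lt_of_lt_of_le hz hzd)]
      exact hzd
    have hA := hle AM hAM hAd
    have hB := hle BM hBM hBd
    have hC := hle CM hCM hCd
    have hP : (0:ℝ) < cosh AM * (cosh AM + cosh BM + cosh CM) := by positivity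
    have hPQ : cosh AM * (cosh AM + cosh BM + cosh CM) ≤ 3 * cosh d ^ 2 := by
      nlinarith
    gcongr
end
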